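/- For every n ≥ 0, the set of zigzag knight's paths of size 2n ending on the x-axis is in bijection with the set of peakless Motzkin paths of length n+1. Explicitly, the map ψ defined recursively by ψ(ε)=F, ψ(E Ē β)=U ψ(β) D, ψ(N N̄ β)=F ψ(β), and ψ(N Ē β E N̄ γ)=U ψ(β) D ψ(γ) is such a bijection. -/

import Mathlib

open List

/-- The four right-moves of a knight. -/
def KnightSteps : Set (ℤ × ℤ) := {(2,1), (2,-1), (1,2), (1,-2)}

/-- All partial sums of the y-coordinates are nonnegative (the path stays in ℕ²). -/
def NonnegHeights (p : List (ℤ × ℤ)) : Prop :=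
  ∀ i, 0 ≤ ((p.take i).map Prod.snd).sum

/-- A partial knight's path: steps from `KnightSteps`, never going below the x-axis. -/
def IsPartialKnight (p : List (ℤ × ℤ)) : Prop :=
  (∀ s ∈ p, s ∈ KnightSteps) ∧ NonnegHeights p

/-- Any two consecutive steps have vertical components of opposite sign. -/
def IsZigzag (p : List (ℤ × ℤ)) : Prop :=
  List.Chain' (fun a b => a.2 * b.2 < 0) p

/-- A partial zigzag knight's path. -/
def IsPartialZigzag (p : List (ℤ × ℤ)) : Prop :=
  IsPartialKnight p ∧ IsZigzag p

/-- The height of the endpoint of a path. -/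
def pathHeight (p : List (ℤ × ℤ)) : ℤ := (p.map Prod.snd).sum

/-- The size (x-coordinate of the endpoint) of a path. -/
def pathSize (p : List (ℤ × ℤ)) : ℤ := (p.map Prod.fst).sum

/-- A zigzag knight's path ending on the x-axis. -/
def IsZigzagKnightPath (p : List (ℤ × ℤ)) : Prop :=
  IsPartialZigzag p ∧ pathHeight p = 0

/-- The last step of `p` exists and is an up-step. -/
def EndsWithUp (p : List (ℤ × ℤ)) : Prop :=
  ∃ s, p.getLast? = some s ∧ 0 < s.2

/-- The last step of `p` exists and is a down-step. -/
def EndsWithDown (p : List (ℤ × ℤ)) : Prop :=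
  ∃ s, p.getLast? = some s ∧ s.2 < 0

def Estep : ℤ × ℤ := (2, 1)
def Ebar  : ℤ × ℤ := (2, -1)
def Nstep : ℤ × ℤ := (1, 2)
def Nbar  : ℤ × ℤ := (1, -2)

/-- A peakless Motzkin path, encoded as a list of steps `1 = U`, `-1 = D`, `0 = F`
with nonnegative partial sums, ending at height 0, and with no factor `UD`. -/
def IsPeaklessMotzkin (m : List ℤ) : Prop :=
  (∀ x ∈ m, x = 1 ∨ x = -1 ∨ x = 0) ∧ (∀ i, 0 ≤ (m.take i).sum) ∧ m.sum = 0 ∧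
    List.Chain' (fun a b => ¬ (a = 1 ∧ b = -1)) m

/-!
Both families have a first-return decomposition, and `ψ` matches them piece by piece.
A non-empty zigzag knight's path begins with `E Ē`, `N N̄` or `N Ē`; in the last case the path,
now at height `1`, can only return to the axis through a factor `E N̄` (from height `1` up to `2`
and down to `0`), and its first return splits it as `N Ē β E N̄ γ`. A non-empty peakless Motzkin
path is `F m` or `U M D w`, where `D` is its first return to the axis and `M` is non-empty since
there is no peak. Induction along these decompositions shows that `ψ` lands in peakless Motzkin
paths, with `2 |ψ p| = size p + 2`, and reaches each of them; the uniqueness of the first return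
makes it injective.
-/

def NonnegFrom (c : ℤ) (l : List ℤ) : Prop :=
  ∀ i, 0 ≤ c + (l.take i).sum

section NonnegFrom

variable {c d x : ℤ} {l a b : List ℤ}

@[simp] lemma nonnegFrom_nil : NonnegFrom c [] ↔ 0 ≤ c := by
  simp [NonnegFrom]

@[simp] lemma nonnegFrom_cons : NonnegFrom c (x :: l) ↔ 0 ≤ c ∧ NonnegFrom (c + x) l := by
  refine ⟨fun h => ⟨by simpa using h 0, fun i => ?_⟩, fun ⟨hc, hl⟩ => ?_⟩
  · simpa [add_assoc] using h (i + 1)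
  · rintro (_ | i)
    · simpa using hc
    · simpa [add_assoc] using hl i

lemma NonnegFrom.nonneg (h : NonnegFrom c l) : 0 ≤ c := by
  simpa using h 0

@[simp] lemma nonnegFrom_append :
    NonnegFrom c (a ++ b) ↔ NonnegFrom c a ∧ NonnegFrom (c + a.sum) b := by
  induction a generalizing c with
  | nil => simpa using fun h : NonnegFrom c b => h.nonneg
  | cons y a ih => simp [ih, add_assoc, and_assoc]

lemma NonnegFrom.mono (h : NonnegFrom c l) (hcd : c ≤ d) : NonnegFrom d l :=
  fun i => (h i).trans (by omega)

lemma NonnegFrom.add_sum_nonneg (h : NonnegFrom c l) : 0 ≤ c + l.sum := by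
  simpa using h l.length

lemma NonnegFrom.nonneg_of_mem_head? (h : NonnegFrom 0 l) : ∀ x ∈ l.head?, 0 ≤ x := by
  cases l with
  | nil => simp
  | cons y l => simpa using (nonnegFrom_cons.1 h).2.nonneg

lemma NonnegFrom.nonpos_of_mem_getLast? (h : NonnegFrom 0 l) (hs : l.sum = 0) :
    ∀ x ∈ l.getLast?, x ≤ 0 := by
  obtain rfl | ⟨l, y, rfl⟩ := l.eq_nil_or_concat'
  · simp
  · simp only [nonnegFrom_append, List.sum_append, List.sum_singleton] at h hs
    have := h.1.add_sum_nonneg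
    simp
    omega

lemma exists_first_passage {α : Type*} (f : α → ℤ) {c : ℤ} {l : List α} (hc : 0 ≤ c)
    (hl : c + (l.map f).sum < 0) :
    ∃ a x b, l = a ++ x :: b ∧ NonnegFrom c (a.map f) ∧ c + (a.map f).sum + f x < 0 := by
  induction l generalizing c with
  | nil => simp at hl; omega
  | cons y l ih =>
    by_cases hy : c + f y < 0
    · exact ⟨[], y, l, rfl, by simpa using hc, by simpa using hy⟩
    · obtain ⟨a, x, b, rfl, ha, hx⟩ := ih (c := c + f y) (by omega) (by simp at hl; omega)
      exact ⟨y :: a, x, b, rfl, by simpa [hc] using ha, by simpa [add_assoc] using hx⟩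

lemma first_passage_unique {a a' b b' : List ℤ} {x x' : ℤ}
    (ha : NonnegFrom c a) (hx : c + a.sum + x < 0)
    (ha' : NonnegFrom c a') (hx' : c + a'.sum + x' < 0)
    (h : a ++ x :: b = a' ++ x' :: b') : a = a' ∧ x = x' ∧ b = b' := by
  induction a generalizing c a' with
  | nil =>
    cases a' with
    | nil => simpa using h
    | cons y a' =>
      obtain ⟨rfl, -⟩ := List.cons.inj h
      have := (nonnegFrom_cons.1 ha').2.nonneg
      simp at hx
      omega
  | cons y a ih =>
    cases a' with
    | nil =>
      obtain ⟨rfl, -⟩ := List.cons.inj h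
      have := (nonnegFrom_cons.1 ha).2.nonneg
      simp at hx'
      omega
    | cons y' a' =>
      simp only [List.cons_append, List.cons.injEq] at h
      obtain ⟨rfl, h⟩ := h
      simp only [nonnegFrom_cons, List.sum_cons] at ha ha' hx hx'
      obtain ⟨rfl, rfl, rfl⟩ := ih ha.2 (by omega) ha'.2 (by omega) h
      exact ⟨rfl, rfl, rfl⟩

end NonnegFrom

section Motzkin

variable {m M M' w w' : List ℤ}

lemma isPeaklessMotzkin_iff : IsPeaklessMotzkin m ↔
    (∀ x ∈ m, x = 1 ∨ x = -1 ∨ x = 0) ∧ NonnegFrom 0 m ∧ m.sum = 0 ∧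
      m.IsChain (fun a b => ¬(a = 1 ∧ b = -1)) := by
  simp only [IsPeaklessMotzkin, NonnegFrom, zero_add]
  exact Iff.rfl

lemma isPeaklessMotzkin_nil : IsPeaklessMotzkin [] := by
  simp [isPeaklessMotzkin_iff]

@[simp] lemma isPeaklessMotzkin_zero_cons : IsPeaklessMotzkin (0 :: m) ↔ IsPeaklessMotzkin m := by
  simp [isPeaklessMotzkin_iff, List.isChain_cons]

lemma IsPeaklessMotzkin.up_down (hM : IsPeaklessMotzkin M) (hM0 : M ≠ [])
    (hw : IsPeaklessMotzkin w) : IsPeaklessMotzkin (1 :: (M ++ -1 :: w)) := by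
  obtain ⟨hMs, hMn, hMsum, hMc⟩ := isPeaklessMotzkin_iff.1 hM
  obtain ⟨hws, hwn, hwsum, hwc⟩ := isPeaklessMotzkin_iff.1 hw
  refine isPeaklessMotzkin_iff.2 ⟨?_, ?_, by simp [hMsum, hwsum], ?_⟩
  · simp only [List.mem_cons, List.mem_append]
    rintro x (rfl | hx | rfl | hx) <;> simp [*]
  · simpa [hMsum, hwn] using hMn.mono zero_le_one
  · refine List.isChain_cons.2 ⟨?_, List.isChain_append.2 ⟨hMc, ?_, ?_⟩⟩
    · intro y hy
      rw [List.head?_append_of_ne_nil _ hM0] at hy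
      have := hMn.nonneg_of_mem_head? y hy
      omega
    · exact List.isChain_cons.2 ⟨by simp, hwc⟩
    · intro x hx _ _
      have := hMn.nonpos_of_mem_getLast? hMsum x hx
      omega

lemma IsPeaklessMotzkin.append_neg_one_cons_inj (hM : IsPeaklessMotzkin M)
    (hM' : IsPeaklessMotzkin M') (h : M ++ -1 :: w = M' ++ -1 :: w') : M = M' ∧ w = w' := by
  obtain ⟨-, hMn, hMs, -⟩ := isPeaklessMotzkin_iff.1 hM
  obtain ⟨-, hMn', hMs', -⟩ := isPeaklessMotzkin_iff.1 hM'
  obtain ⟨hMM, -, hww⟩ := first_passage_unique hMn (by omega) hMn' (by omega) h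
  exact ⟨hMM, hww⟩

lemma IsPeaklessMotzkin.decomposition (hm : IsPeaklessMotzkin m) (hne : m ≠ []) :
    (∃ t, m = 0 :: t ∧ IsPeaklessMotzkin t) ∨
      ∃ M w, m = 1 :: (M ++ -1 :: w) ∧ M ≠ [] ∧ IsPeaklessMotzkin M ∧ IsPeaklessMotzkin w := by
  obtain ⟨hs, hn, hsum, hc⟩ := isPeaklessMotzkin_iff.1 hm
  obtain ⟨y, t, rfl⟩ := List.exists_cons_of_ne_nil hne
  have hy := hn.nonneg_of_mem_head? y rfl
  rcases hs y List.mem_cons_self with rfl | rfl | rfl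
  · right
    simp only [nonnegFrom_cons, zero_add, List.sum_cons] at hn hsum
    obtain ⟨M, x, w, rfl, hMn, hx⟩ :=
      exists_first_passage id le_rfl (c := 0) (l := t) (by simp; omega)
    simp only [List.map_id, id_eq, zero_add] at hMn hx
    simp only [nonnegFrom_append, nonnegFrom_cons, List.sum_append, List.sum_cons] at hn hsum
    obtain ⟨-, -, -, hwn⟩ := hn
    have := hMn.add_sum_nonneg
    obtain rfl : x = -1 := by
      rcases hs x (by simp) with rfl | rfl | rfl <;> omega
    refine ⟨M, w, rfl, ?_, ?_, ?_⟩
    · rintro rfl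
      simp at hc
    · exact isPeaklessMotzkin_iff.2 ⟨fun x hx => hs x (by simp [hx]), hMn,
        by omega, hc.infix ⟨[1], -1 :: w, by simp⟩⟩
    · exact isPeaklessMotzkin_iff.2 ⟨fun x hx => hs x (by simp [hx]), hwn.mono (by omega),
        by omega, hc.infix ⟨1 :: (M ++ [-1]), [], by simp⟩⟩
  · omega
  · exact Or.inl ⟨t, rfl, isPeaklessMotzkin_zero_cons.1 hm⟩

end Motzkin

section KnightPath

variable {s : ℤ × ℤ} {p q β γ : List (ℤ × ℤ)}

lemma snd_ne_zero_of_mem_knightSteps (hs : s ∈ KnightSteps) : s.2 ≠ 0 := by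
  simp only [KnightSteps, Set.mem_insert_iff, Set.mem_singleton_iff] at hs
  rcases hs with rfl | rfl | rfl | rfl <;> simp

lemma eq_estep_or_nstep (hs : s ∈ KnightSteps) (hup : 0 < s.2) : s = Estep ∨ s = Nstep := by
  simp only [KnightSteps, Set.mem_insert_iff, Set.mem_singleton_iff] at hs
  rcases hs with rfl | rfl | rfl | rfl <;> simp_all [Estep, Nstep]

lemma eq_ebar_or_nbar (hs : s ∈ KnightSteps) (hdown : s.2 < 0) : s = Ebar ∨ s = Nbar := by
  simp only [KnightSteps, Set.mem_insert_iff, Set.mem_singleton_iff] at hs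
  rcases hs with rfl | rfl | rfl | rfl <;> simp_all [Ebar, Nbar]

@[simp] lemma estep_mem_knightSteps : Estep ∈ KnightSteps := by simp [KnightSteps, Estep]
@[simp] lemma ebar_mem_knightSteps : Ebar ∈ KnightSteps := by simp [KnightSteps, Ebar]
@[simp] lemma nstep_mem_knightSteps : Nstep ∈ KnightSteps := by simp [KnightSteps, Nstep]
@[simp] lemma nbar_mem_knightSteps : Nbar ∈ KnightSteps := by simp [KnightSteps, Nbar]

lemma isZigzagKnightPath_iff : IsZigzagKnightPath p ↔
    (∀ s ∈ p, s ∈ KnightSteps) ∧ IsZigzag p ∧ NonnegFrom 0 (p.map Prod.snd) ∧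
      (p.map Prod.snd).sum = 0 := by
  simp only [IsZigzagKnightPath, IsPartialZigzag, IsPartialKnight, NonnegHeights, NonnegFrom,
    pathHeight, zero_add, List.map_take]
  tauto

/-- The concatenations of up-down pairs of steps. -/
def IsUpDownZigzag (p : List (ℤ × ℤ)) : Prop :=
  IsZigzag p ∧ (∀ s ∈ p.head?, 0 < s.2) ∧ ∀ s ∈ p.getLast?, s.2 < 0

lemma isUpDownZigzag_pair {u d : ℤ × ℤ} (hu : 0 < u.2) (hd : d.2 < 0) :
    IsUpDownZigzag [u, d] :=
  ⟨List.isChain_pair.2 (mul_neg_of_pos_of_neg hu hd), by simpa using hu, by simpa using hd⟩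

lemma IsUpDownZigzag.append (hp : IsUpDownZigzag p) (hq : IsUpDownZigzag q) :
    IsUpDownZigzag (p ++ q) := by
  obtain ⟨hpz, hph, hpl⟩ := hp
  obtain ⟨hqz, hqh, hql⟩ := hq
  refine ⟨List.isChain_append.2 ⟨hpz, hqz, fun x hx y hy => ?_⟩, ?_, ?_⟩
  · exact mul_neg_of_neg_of_pos (hpl x hx) (hqh y hy)
  · cases p with
    | nil => simpa using hqh
    | cons s p => simpa using hph
  · obtain rfl | ⟨q, t, rfl⟩ := q.eq_nil_or_concat'
    · simpa using hpl
    · simpa [← List.append_assoc] using hql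

lemma IsZigzagKnightPath.isUpDownZigzag (hp : IsZigzagKnightPath p) : IsUpDownZigzag p := by
  obtain ⟨hk, hz, hn, hs⟩ := isZigzagKnightPath_iff.1 hp
  refine ⟨hz, fun s hs' => ?_, fun s hs' => ?_⟩
  · have := hn.nonneg_of_mem_head? s.2
      (by rw [List.head?_map]; exact Option.mem_map_of_mem _ hs')
    have := snd_ne_zero_of_mem_knightSteps (hk s (List.mem_of_mem_head? hs'))
    omega
  · have := hn.nonpos_of_mem_getLast? hs s.2
      (by rw [List.getLast?_map]; exact Option.mem_map_of_mem _ hs')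
    have := snd_ne_zero_of_mem_knightSteps (hk s (List.mem_of_mem_getLast? hs'))
    omega

lemma isZigzagKnightPath_nil : IsZigzagKnightPath [] :=
  isZigzagKnightPath_iff.2 ⟨by simp, List.IsChain.nil, by simp, rfl⟩

lemma isZigzagKnightPath_pair {u d : ℤ × ℤ} (hu : u ∈ KnightSteps) (hd : d ∈ KnightSteps)
    (hup : 0 < u.2) (hsum : u.2 + d.2 = 0) : IsZigzagKnightPath [u, d] :=
  isZigzagKnightPath_iff.2 ⟨by simp [hu, hd], List.isChain_pair.2 (by nlinarith),
    by simp [hup.le, hsum], by simp [hsum]⟩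

lemma IsZigzagKnightPath.append (hp : IsZigzagKnightPath p) (hq : IsZigzagKnightPath q) :
    IsZigzagKnightPath (p ++ q) := by
  obtain ⟨hpk, -, hpn, hps⟩ := isZigzagKnightPath_iff.1 hp
  obtain ⟨hqk, -, hqn, hqs⟩ := isZigzagKnightPath_iff.1 hq
  exact isZigzagKnightPath_iff.2 ⟨List.forall_mem_append.2 ⟨hpk, hqk⟩,
    (hp.isUpDownZigzag.append hq.isUpDownZigzag).1, by simp [hpn, hps, hqn], by simp [hps, hqs]⟩

lemma IsZigzagKnightPath.estep_ebar_cons (hβ : IsZigzagKnightPath β) :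
    IsZigzagKnightPath (Estep :: Ebar :: β) :=
  (isZigzagKnightPath_pair (by simp) (by simp) (by simp [Estep]) (by simp [Estep, Ebar])).append hβ

lemma IsZigzagKnightPath.nstep_nbar_cons (hβ : IsZigzagKnightPath β) :
    IsZigzagKnightPath (Nstep :: Nbar :: β) :=
  (isZigzagKnightPath_pair (by simp) (by simp) (by simp [Nstep]) (by simp [Nstep, Nbar])).append hβ

lemma IsZigzagKnightPath.lift (hβ : IsZigzagKnightPath β) :
    IsZigzagKnightPath (Nstep :: Ebar :: (β ++ [Estep, Nbar])) := by
  obtain ⟨hk, -, hn, hs⟩ := isZigzagKnightPath_iff.1 hβ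
  have hz : IsUpDownZigzag ([Nstep, Ebar] ++ β ++ [Estep, Nbar]) :=
    ((isUpDownZigzag_pair (by simp [Nstep]) (by simp [Ebar])).append hβ.isUpDownZigzag).append
      (isUpDownZigzag_pair (by simp [Estep]) (by simp [Nbar]))
  refine isZigzagKnightPath_iff.2
    ⟨?_, by simpa using hz.1, ?_, by simp [hs, Nstep, Ebar, Estep, Nbar]⟩
  · simpa [or_imp, forall_and, -Prod.forall] using hk
  · simpa [hs, Nstep, Ebar, Estep, Nbar] using hn.mono zero_le_one

lemma IsZigzagKnightPath.nstep_ebar_cons_append (hβ : IsZigzagKnightPath β)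
    (hγ : IsZigzagKnightPath γ) :
    IsZigzagKnightPath (Nstep :: Ebar :: (β ++ Estep :: Nbar :: γ)) := by
  simpa using hβ.lift.append hγ

end KnightPath

section Decomposition

variable {p r : List (ℤ × ℤ)}

lemma exists_eq_append_estep_nbar_cons (hk : ∀ s ∈ r, s ∈ KnightSteps)
    (hz : IsZigzag (Ebar :: r)) (hn : NonnegFrom 1 (r.map Prod.snd))
    (hs : (r.map Prod.snd).sum = -1) :
    ∃ β γ, r = β ++ Estep :: Nbar :: γ ∧ IsZigzagKnightPath β ∧ IsZigzagKnightPath γ := by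
  obtain ⟨a, x, γ, rfl, ha, hx⟩ :=
    exists_first_passage Prod.snd le_rfl (c := 0) (l := r) (by omega)
  simp only [List.map_append, List.map_cons, nonnegFrom_append, nonnegFrom_cons,
    List.sum_append, List.sum_cons] at hn hs
  obtain ⟨-, hx1, hγn⟩ := hn
  have hxd : x.2 < 0 := by have := ha.add_sum_nonneg; omega
  -- Measured from the start of `r`, the step `x` down to `-1` follows an up step `y` (not `Ē`),
  -- and going up from height `≥ 0` and then down to `-1` is only possible as `E` from `0`, `N̄`.
  obtain rfl | ⟨β, y, rfl⟩ := a.eq_nil_or_concat'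
  · have : Ebar.2 * x.2 < 0 := (List.isChain_cons_cons.1 hz).1
    simp only [Ebar] at this
    omega
  have hyup : 0 < y.2 := by
    have : IsZigzag (Ebar :: (β ++ y :: x :: γ)) := by simpa using hz
    nlinarith [(List.isChain_cons_append_cons_cons.1 this).2.1]
  simp only [List.map_append, List.map_cons, List.map_nil, List.sum_append, List.sum_cons,
    List.sum_nil, add_zero, zero_add, nonnegFrom_append] at ha hx hx1 hγn hs
  have hβ0 := ha.1.add_sum_nonneg
  obtain ⟨rfl, rfl, hβs⟩ : y = Estep ∧ x = Nbar ∧ (β.map Prod.snd).sum = 0 := by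
    rcases eq_estep_or_nstep (hk y (by simp)) hyup with rfl | rfl <;>
      rcases eq_ebar_or_nbar (hk x (by simp)) hxd with rfl | rfl <;>
      simp [Estep, Ebar, Nstep, Nbar] at hx hx1 ⊢ <;> omega
  refine ⟨β, γ, by simp, ?_, ?_⟩
  · exact isZigzagKnightPath_iff.2 ⟨fun s hs => hk s (by simp [hs]),
      List.IsChain.infix hz ⟨[Ebar], [Estep, Nbar] ++ γ, by simp⟩, ha.1, hβs⟩
  · exact isZigzagKnightPath_iff.2 ⟨fun s hs => hk s (by simp [hs]),
      List.IsChain.infix hz ⟨Ebar :: β ++ [Estep, Nbar], [], by simp⟩,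
      by simpa [hβs, Estep, Nbar] using hγn, by simp [Estep, Nbar] at hs; omega⟩

theorem IsZigzagKnightPath.decomposition (hp : IsZigzagKnightPath p) :
    p = [] ∨ (∃ β, p = Estep :: Ebar :: β ∧ IsZigzagKnightPath β) ∨
      (∃ β, p = Nstep :: Nbar :: β ∧ IsZigzagKnightPath β) ∨
      ∃ β γ, p = Nstep :: Ebar :: (β ++ Estep :: Nbar :: γ) ∧
        IsZigzagKnightPath β ∧ IsZigzagKnightPath γ := by
  obtain ⟨-, hhead, hlast⟩ := hp.isUpDownZigzag
  obtain ⟨hk, hz, hn, hs⟩ := isZigzagKnightPath_iff.1 hp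
  rcases p with _ | ⟨u, _ | ⟨d, r⟩⟩
  · exact Or.inl rfl
  · simp at hhead hlast
    omega
  right
  have hup : 0 < u.2 := by simpa using hhead
  have hud : u.2 * d.2 < 0 := (List.isChain_cons_cons.1 hz).1
  have hrz : IsZigzag (d :: r) := (List.isChain_cons_cons.1 hz).2
  have hrk : ∀ s ∈ r, s ∈ KnightSteps := fun s hs => hk s (by simp [hs])
  simp only [List.map_cons, nonnegFrom_cons, List.sum_cons] at hn hs
  obtain ⟨-, -, hrn⟩ := hn
  rcases eq_estep_or_nstep (hk u (by simp)) hup with rfl | rfl <;>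
    rcases eq_ebar_or_nbar (hk d (by simp)) (by nlinarith) with rfl | rfl <;>
    simp only [Estep, Ebar, Nstep, Nbar] at hrn hs
  · exact Or.inl ⟨r, rfl, isZigzagKnightPath_iff.2 ⟨hrk, hrz.tail, hrn, by omega⟩⟩
  · simpa using hrn.nonneg
  · obtain ⟨β, γ, rfl, hβ, hγ⟩ :=
      exists_eq_append_estep_nbar_cons hrk hrz (by simpa using hrn) (by omega)
    exact Or.inr (Or.inr ⟨β, γ, rfl, hβ, hγ⟩)
  · exact Or.inr (Or.inl ⟨r, rfl, isZigzagKnightPath_iff.2 ⟨hrk, hrz.tail, hrn, by omega⟩⟩)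

@[elab_as_elim]
theorem IsZigzagKnightPath.induction_on {motive : List (ℤ × ℤ) → Prop}
    (hp : IsZigzagKnightPath p) (nil : motive [])
    (estep_ebar : ∀ β, IsZigzagKnightPath β → motive β → motive (Estep :: Ebar :: β))
    (nstep_nbar : ∀ β, IsZigzagKnightPath β → motive β → motive (Nstep :: Nbar :: β))
    (nstep_ebar : ∀ β γ, IsZigzagKnightPath β → IsZigzagKnightPath γ → motive β → motive γ →
      motive (Nstep :: Ebar :: (β ++ Estep :: Nbar :: γ))) :
    motive p := by
  induction hlen : p.length using Nat.strong_induction_on generalizing p with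
  | _ n ih =>
    subst hlen
    rcases hp.decomposition with rfl | ⟨β, rfl, hβ⟩ | ⟨β, rfl, hβ⟩ | ⟨β, γ, rfl, hβ, hγ⟩
    · exact nil
    · exact estep_ebar β hβ (ih _ (by simp) hβ rfl)
    · exact nstep_nbar β hβ (ih _ (by simp) hβ rfl)
    · exact nstep_ebar β γ hβ hγ (ih _ (by simp; omega) hβ rfl) (ih _ (by simp; omega) hγ rfl)

end Decomposition

structure PsiRecursion (ψ : List (ℤ × ℤ) → List ℤ) : Prop where
  nil : ψ [] = [0]
  estep_ebar : ∀ β, IsZigzagKnightPath β → ψ (Estep :: Ebar :: β) = 1 :: (ψ β ++ [-1])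
  nstep_nbar : ∀ β, IsZigzagKnightPath β → ψ (Nstep :: Nbar :: β) = 0 :: ψ β
  nstep_ebar : ∀ β γ, IsZigzagKnightPath β → IsZigzagKnightPath γ →
    ψ (Nstep :: Ebar :: (β ++ Estep :: Nbar :: γ)) = 1 :: (ψ β ++ -1 :: ψ γ)

namespace PsiRecursion

variable {ψ : List (ℤ × ℤ) → List ℤ} {p : List (ℤ × ℤ)} {m : List ℤ}

lemma ne_nil (hψ : PsiRecursion ψ) (hp : IsZigzagKnightPath p) : ψ p ≠ [] := by
  rcases hp.decomposition with rfl | ⟨β, rfl, hβ⟩ | ⟨β, rfl, hβ⟩ | ⟨β, γ, rfl, hβ, hγ⟩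
  · simp [hψ.nil]
  · simp [hψ.estep_ebar β hβ]
  · simp [hψ.nstep_nbar β hβ]
  · simp [hψ.nstep_ebar β γ hβ hγ]

lemma two_mul_length (hψ : PsiRecursion ψ) (hp : IsZigzagKnightPath p) :
    2 * ((ψ p).length : ℤ) = pathSize p + 2 := by
  refine hp.induction_on ?_ ?_ ?_ ?_
  · simp [hψ.nil, pathSize]
  · intro β hβ ih
    rw [hψ.estep_ebar β hβ]
    simp [pathSize, Estep, Ebar] at ih ⊢
    omega
  · intro β hβ ih
    rw [hψ.nstep_nbar β hβ]
    simp [pathSize, Nstep, Nbar] at ih ⊢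
    omega
  · intro β γ hβ hγ ihβ ihγ
    rw [hψ.nstep_ebar β γ hβ hγ]
    simp [pathSize, Nstep, Ebar, Estep, Nbar] at ihβ ihγ ⊢
    omega

lemma isPeaklessMotzkin (hψ : PsiRecursion ψ) (hp : IsZigzagKnightPath p) :
    IsPeaklessMotzkin (ψ p) := by
  refine hp.induction_on ?_ ?_ ?_ ?_
  · simpa [hψ.nil] using isPeaklessMotzkin_nil
  · intro β hβ ih
    rw [hψ.estep_ebar β hβ]
    exact ih.up_down (hψ.ne_nil hβ) isPeaklessMotzkin_nil
  · intro β hβ ih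
    simpa [hψ.nstep_nbar β hβ] using ih
  · intro β γ hβ hγ ihβ ihγ
    rw [hψ.nstep_ebar β γ hβ hγ]
    exact ihβ.up_down (hψ.ne_nil hβ) ihγ

lemma injOn (hψ : PsiRecursion ψ) : Set.InjOn ψ {p | IsZigzagKnightPath p} := by
  have split {β β' : List (ℤ × ℤ)} {w w' : List ℤ} (hβ : IsZigzagKnightPath β)
      (hβ' : IsZigzagKnightPath β') (h : ψ β ++ -1 :: w = ψ β' ++ -1 :: w') :
      ψ β = ψ β' ∧ w = w' :=
    (hψ.isPeaklessMotzkin hβ).append_neg_one_cons_inj (hψ.isPeaklessMotzkin hβ') h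
  intro p hp
  refine hp.induction_on ?_ ?_ ?_ ?_ <;>
  [intro q hq h; intro β hβ ih q hq h; intro β hβ ih q hq h; intro β γ hβ hγ ihβ ihγ q hq h] <;>
  rcases hq.decomposition with rfl | ⟨β', rfl, hβ'⟩ | ⟨β', rfl, hβ'⟩ | ⟨β', γ', rfl, hβ', hγ'⟩ <;>
  simp (disch := assumption) [hψ.nil, hψ.estep_ebar, hψ.nstep_nbar, hψ.nstep_ebar] at h ⊢
  -- Besides the matching shapes, only `F` against `ψ [] = F` and `U ψβ D` against `U ψβ D ψγ`
  -- survive the comparison of first letters.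
  · exact hψ.ne_nil hβ' h
  · exact ih hβ' h
  · exact absurd (split hβ hβ' h).2.symm (hψ.ne_nil hγ')
  · exact hψ.ne_nil hβ h
  · exact ih hβ' h
  · exact absurd (split hβ hβ' h).2 (hψ.ne_nil hγ)
  · obtain ⟨hββ', hγγ'⟩ := split hβ hβ' h
    rw [ihβ hβ' hββ', ihγ hγ' hγγ']

lemma exists_preimage (hψ : PsiRecursion ψ) (hm : IsPeaklessMotzkin m) (hne : m ≠ []) :
    ∃ p, IsZigzagKnightPath p ∧ ψ p = m := by
  induction hlen : m.length using Nat.strong_induction_on generalizing m with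
  | _ n ih =>
    subst hlen
    rcases hm.decomposition hne with ⟨t, rfl, ht⟩ | ⟨M, w, rfl, hM0, hM, hw⟩
    · rcases eq_or_ne t [] with rfl | ht0
      · exact ⟨[], isZigzagKnightPath_nil, hψ.nil⟩
      obtain ⟨β, hβ, rfl⟩ := ih _ (by simp) ht ht0 rfl
      exact ⟨_, hβ.nstep_nbar_cons, hψ.nstep_nbar β hβ⟩
    · obtain ⟨β, hβ, rfl⟩ := ih _ (by simp) hM hM0 rfl
      rcases eq_or_ne w [] with rfl | hw0
      · exact ⟨_, hβ.estep_ebar_cons, hψ.estep_ebar β hβ⟩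
      obtain ⟨γ, hγ, rfl⟩ := ih _ (by simp; omega) hw hw0 rfl
      exact ⟨_, hβ.nstep_ebar_cons_append hγ, hψ.nstep_ebar β γ hβ hγ⟩

end PsiRecursion

/-- the map ψ with ψ(ε)=F, ψ(E Ē β)=U ψ(β) D, ψ(N N̄ β)=F ψ(β),
ψ(N Ē β E N̄ γ)=U ψ(β) D ψ(γ) is a bijection from zigzag knight's paths of size 2n
ending on the x-axis to peakless Motzkin paths of length n+1. -/
theorem stmt8 (ψ : List (ℤ × ℤ) → List ℤ)
    (h0 : ψ [] = [0])
    (h1 : ∀ β, IsZigzagKnightPath β →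
        ψ (Estep :: Ebar :: β) = 1 :: (ψ β ++ [-1]))
    (h2 : ∀ β, IsZigzagKnightPath β →
        ψ (Nstep :: Nbar :: β) = 0 :: ψ β)
    (h3 : ∀ β γ, IsZigzagKnightPath β → IsZigzagKnightPath γ →
        ψ (Nstep :: Ebar :: (β ++ Estep :: Nbar :: γ)) = 1 :: (ψ β ++ -1 :: ψ γ))
    (n : ℕ) :
    Set.BijOn ψ {p | IsZigzagKnightPath p ∧ pathSize p = 2 * n}
      {m | IsPeaklessMotzkin m ∧ m.length = n + 1} := by
  have hψ : PsiRecursion ψ := ⟨h0, h1, h2, h3⟩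
  refine ⟨fun p ⟨hp, hsize⟩ => ⟨hψ.isPeaklessMotzkin hp, ?_⟩,
    hψ.injOn.mono fun p hp => hp.1, fun m ⟨hm, hlen⟩ => ?_⟩
  · have := hψ.two_mul_length hp
    omega
  · obtain ⟨p, hp, rfl⟩ := hψ.exists_preimage hm (List.ne_nil_of_length_pos (by omega))
    have := hψ.two_mul_length hp
    exact ⟨p, ⟨hp, by omega⟩, rfl⟩
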